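/- arXiv:1806.00952 — 2 statements merged into one kernel-verified Lean document; each statement's English description precedes it below -/
import Mathlib

section
/- In the interpolating (noiseless) linear regime, i.e., when w ∈ ℝ^m satisfies y_i = x_iᵀw for all i, the SGD iterates satisfy, for every T ≥ 1, the identity ‖w − w_0‖² = ‖w − w_T‖² + η Σ_{i=1}^T (2 − η‖x_i‖²) e_i², where e_i := y_i − x_iᵀw_{i−1}. -/
open scoped RealInnerProductSpace

/-!
Each SGD step moves `w` along `x` by `η e`, where in the noiseless regime the residual
`e = y - ⟪x, w⟫` equals `⟪x, w⋆ - w⟫`. Expanding `‖w⋆ - w - η e x‖²` therefore decreases the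
squared distance to `w⋆` by exactly `η (2 - η ‖x‖²) e²`, and the identity follows by telescoping.
-/

section

variable {E : Type*} [NormedAddCommGroup E] [InnerProductSpace ℝ E]

lemma norm_sub_smul_sq (v u : E) (c : ℝ) :
    ‖v - c • u‖ ^ 2 = ‖v‖ ^ 2 - 2 * c * ⟪u, v⟫ + c ^ 2 * ‖u‖ ^ 2 := by
  rw [norm_sub_sq_real, norm_smul, real_inner_smul_right, real_inner_comm, mul_pow,
    Real.norm_eq_abs, sq_abs]
  ring

lemma norm_sub_sgd_step_sq (wstar w x : E) (η : ℝ) :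
    ‖wstar - w‖ ^ 2 =
      ‖wstar - (w + (η * ⟪x, wstar - w⟫) • x)‖ ^ 2
        + η * ((2 - η * ‖x‖ ^ 2) * ⟪x, wstar - w⟫ ^ 2) := by
  rw [sub_add_eq_sub_sub, norm_sub_smul_sq]
  ring

theorem norm_sub_sgd_iterate_sq (x : ℕ → E) (y : ℕ → ℝ) (η : ℝ) (w : ℕ → E) (wstar : E)
    (hupd : ∀ i, w (i + 1) = w i + (η * (y (i + 1) - ⟪x (i + 1), w i⟫)) • x (i + 1))
    (hdata : ∀ i, y (i + 1) = ⟪x (i + 1), wstar⟫) (T : ℕ) :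
    ‖wstar - w 0‖ ^ 2 =
      ‖wstar - w T‖ ^ 2
        + η * ∑ i ∈ Finset.range T,
            (2 - η * ‖x (i + 1)‖ ^ 2) * (y (i + 1) - ⟪x (i + 1), w i⟫) ^ 2 := by
  have hresidual : ∀ i, y (i + 1) - ⟪x (i + 1), w i⟫ = ⟪x (i + 1), wstar - w i⟫ := fun i => by
    rw [inner_sub_right, hdata i]
  induction T with
  | zero => simp
  | succ n ih =>
    rw [ih, norm_sub_sgd_step_sq wstar (w n) (x (n + 1)) η, ← hresidual, ← hupd,
      Finset.sum_range_succ]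
    ring

end

theorem stmt_4_general {m : ℕ} (x : ℕ → EuclideanSpace ℝ (Fin m)) (y : ℕ → ℝ)
    (η : ℝ)
    (w₀ : EuclideanSpace ℝ (Fin m))
    (w : ℕ → EuclideanSpace ℝ (Fin m)) (hw0 : w 0 = w₀)
    (hupd : ∀ i : ℕ,
      w (i + 1) = w i + (η * (y (i + 1) - ⟪x (i + 1), w i⟫)) • x (i + 1))
    (wstar : EuclideanSpace ℝ (Fin m))
    (hdata : ∀ i : ℕ, y (i + 1) = ⟪x (i + 1), wstar⟫) :
    ∀ T : ℕ, 1 ≤ T →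
      ‖wstar - w₀‖ ^ 2 =
        ‖wstar - w T‖ ^ 2
          + η * ∑ i ∈ Finset.range T,
              (2 - η * ‖x (i + 1)‖ ^ 2) * (y (i + 1) - ⟪x (i + 1), w i⟫) ^ 2 := by
  intro T _
  rw [← hw0]
  exact norm_sub_sgd_iterate_sq x y η w wstar hupd hdata T

/-- fundamental identity for SGD in the interpolating/noiseless linear
regime, Eq. (13) of the paper. -/
theorem stmt_4 {m : ℕ} (x : ℕ → EuclideanSpace ℝ (Fin m)) (y : ℕ → ℝ)
    (η : ℝ) (hη : 0 < η)
    (w₀ : EuclideanSpace ℝ (Fin m))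
    (w : ℕ → EuclideanSpace ℝ (Fin m)) (hw0 : w 0 = w₀)
    (hupd : ∀ i : ℕ,
      w (i + 1) = w i + (η * (y (i + 1) - ⟪x (i + 1), w i⟫)) • x (i + 1))
    (wstar : EuclideanSpace ℝ (Fin m))
    (hdata : ∀ i : ℕ, y (i + 1) = ⟪x (i + 1), wstar⟫) :
    ∀ T : ℕ, 1 ≤ T →
      ‖wstar - w₀‖ ^ 2 =
        ‖wstar - w T‖ ^ 2
          + η * ∑ i ∈ Finset.range T,
              (2 - η * ‖x (i + 1)‖ ^ 2) * (y (i + 1) - ⟪x (i + 1), w i⟫) ^ 2 :=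
  stmt_4_general x y η w₀ w hw0 hupd wstar hdata
end

section
/- (Minimax bound for SMD with time-varying step sizes.) Consider differentiable models f_i : ℝ^m → ℝ and a nonnegative differentiable loss l with l(0) = l'(0) = 0. Suppose the positive step sizes η_i are such that w ↦ ψ(w) − η_i L_i(w) is convex for every i = 1, …, T. Then for every parameter w and noise values v_i with y_i = f_i(w) + v_i, the time-varying SMD iterates satisfy D_ψ(w, w_T) + Σ_{i=1}^T η_i D_{L_i}(w, w_{i−1}) ≤ D_ψ(w, w_0) + Σ_{i=1}^T η_i l(v_i). -/
open scoped RealInnerProductSpace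

/-- Bregman-divergence-like quantity `D_g(u, u') = g(u) - g(u') - ∇g(u')ᵀ(u - u')` of a
(not necessarily convex) function `g`. -/
noncomputable def Dbreg {m : ℕ} (g : EuclideanSpace ℝ (Fin m) → ℝ)
    (u u' : EuclideanSpace ℝ (Fin m)) : ℝ :=
  g u - g u' - ⟪gradient g u', u - u'⟫

/-!
One SMD step satisfies the exact three-point identity
`D_ψ(w, w_i) + η_i D_{L_i}(w, w_{i-1}) + D_{ψ - η_i L_i}(w_i, w_{i-1}) + η_i L_i(w_i)
  = D_ψ(w, w_{i-1}) + η_i L_i(w)`.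
Convexity of `ψ - η_i L_i` and `l ≥ 0` make the two middle terms nonnegative, and
`L_i(w) = l(v_i)` for the true parameter; summing over `i` telescopes the `D_ψ` terms.
-/

theorem ConvexOn.le_sub_of_hasFDerivAt {E : Type*} [NormedAddCommGroup E] [NormedSpace ℝ E]
    {g : E → ℝ} {g' : E →L[ℝ] ℝ} {x : E} (hg : ConvexOn ℝ Set.univ g)
    (hg' : HasFDerivAt g g' x) (y : E) : g' (y - x) ≤ g y - g x := by
  let φ : ℝ →ᵃ[ℝ] E := AffineMap.lineMap x y
  have hline : ConvexOn ℝ Set.univ (g ∘ φ) := hg.comp_affineMap φ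
  have hderiv : HasDerivAt (g ∘ φ) (g' (y - x)) 0 :=
    HasFDerivAt.comp_hasDerivAt (0 : ℝ) (by simpa [φ] using hg') AffineMap.hasDerivAt_lineMap
  simpa [φ, slope_def_field] using
    hline.le_slope_of_hasDerivAt (Set.mem_univ 0) (Set.mem_univ 1) one_pos hderiv

theorem add_sum_range_le_of_succ_add_le {a b c : ℕ → ℝ} {T : ℕ}
    (h : ∀ i < T, a (i + 1) + b i ≤ a i + c i) :
    a T + ∑ i ∈ Finset.range T, b i ≤ a 0 + ∑ i ∈ Finset.range T, c i := by
  have hsum : ∑ i ∈ Finset.range T, (a (i + 1) - a i + b i) ≤ ∑ i ∈ Finset.range T, c i :=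
    Finset.sum_le_sum fun i hi => by linarith [h i (Finset.mem_range.1 hi)]
  rw [Finset.sum_add_distrib, Finset.sum_range_sub a] at hsum
  linarith

section

variable {m : ℕ}

theorem Dbreg_nonneg {g : EuclideanSpace ℝ (Fin m) → ℝ} (hg : ConvexOn ℝ Set.univ g)
    (hgd : Differentiable ℝ g) (u u' : EuclideanSpace ℝ (Fin m)) : 0 ≤ Dbreg g u u' := by
  have := hg.le_sub_of_hasFDerivAt (hgd u').hasFDerivAt u
  rw [Dbreg, inner_gradient_left]
  linarith

theorem Dbreg_sub_const_mul {ψ L : EuclideanSpace ℝ (Fin m) → ℝ} (c : ℝ)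
    {u u' : EuclideanSpace ℝ (Fin m)} (hψ : DifferentiableAt ℝ ψ u')
    (hL : DifferentiableAt ℝ L u') :
    Dbreg (fun x => ψ x - c * L x) u u' = Dbreg ψ u u' - c * Dbreg L u u' := by
  simp only [Dbreg, inner_gradient_left, fderiv_fun_sub hψ (hL.const_mul c), fderiv_const_mul hL]
  simp only [sub_apply, map_sub, smul_apply, smul_eq_mul]
  ring

-- The bracketed term is `D_{ψ - ηL}(c, b)`.
theorem Dbreg_three_point_of_mirror_step {ψ L : EuclideanSpace ℝ (Fin m) → ℝ} {η : ℝ}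
    {a b c : EuclideanSpace ℝ (Fin m)} (hstep : gradient ψ c = gradient ψ b - η • gradient L b) :
    Dbreg ψ a c + η * Dbreg L a b + (Dbreg ψ c b - η * Dbreg L c b) + η * L c
      = Dbreg ψ a b + η * L a := by
  simp only [Dbreg, hstep, inner_sub_left, inner_sub_right, real_inner_smul_left]
  ring

end

theorem stmt_19_general {m : ℕ} (T : ℕ) (y : ℕ → ℝ)
    (f : ℕ → EuclideanSpace ℝ (Fin m) → ℝ) (hf : ∀ i, Differentiable ℝ (f i))
    (l : ℝ → ℝ) (hl : Differentiable ℝ l) (hlnn : ∀ z, 0 ≤ l z)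
    (ψ : EuclideanSpace ℝ (Fin m) → ℝ) (hψ : Differentiable ℝ ψ)
    (L : ℕ → EuclideanSpace ℝ (Fin m) → ℝ)
    (hLdef : ∀ i u, L i u = l (y i - f i u))
    (η : ℕ → ℝ) (hη : ∀ i, 0 < η i)
    (hstep : ∀ i ∈ Finset.range T,
      ConvexOn ℝ Set.univ (fun u => ψ u - η (i + 1) * L (i + 1) u))
    (w₀ : EuclideanSpace ℝ (Fin m))
    (w : ℕ → EuclideanSpace ℝ (Fin m)) (hw0 : w 0 = w₀)
    (hupd : ∀ i : ℕ,
      gradient ψ (w (i + 1)) =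
        gradient ψ (w i) - η (i + 1) • gradient (L (i + 1)) (w i))
    (wstar : EuclideanSpace ℝ (Fin m)) (v : ℕ → ℝ)
    (hdata : ∀ i : ℕ, y (i + 1) = f (i + 1) wstar + v (i + 1)) :
    Dbreg ψ wstar (w T)
        + ∑ i ∈ Finset.range T, η (i + 1) * Dbreg (L (i + 1)) wstar (w i)
      ≤ Dbreg ψ wstar w₀ + ∑ i ∈ Finset.range T, η (i + 1) * l (v (i + 1)) := by
  have hL (i : ℕ) : Differentiable ℝ (L i) := by
    rw [funext (hLdef i)]
    exact hl.comp ((differentiable_const _).sub (hf i))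
  rw [← hw0]
  refine add_sum_range_le_of_succ_add_le (a := fun n => Dbreg ψ wstar (w n)) fun i hi => ?_
  have hloss_wstar : L (i + 1) wstar = l (v (i + 1)) := by
    rw [hLdef, hdata, add_sub_cancel_left]
  have hloss_nonneg : 0 ≤ η (i + 1) * L (i + 1) (w (i + 1)) :=
    mul_nonneg (hη _).le (hLdef _ _ ▸ hlnn _)
  have hmirror_nonneg :
      0 ≤ Dbreg ψ (w (i + 1)) (w i) - η (i + 1) * Dbreg (L (i + 1)) (w (i + 1)) (w i) := by
    rw [← Dbreg_sub_const_mul _ (hψ _) (hL _ _)]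
    exact Dbreg_nonneg (hstep i (Finset.mem_range.2 hi)) (hψ.sub ((hL _).const_mul _)) _ _
  have hthree_point := Dbreg_three_point_of_mirror_step (a := wstar) (hupd i)
  rw [hloss_wstar] at hthree_point
  linarith

/-- minimax upper bound for SMD with time-varying step sizes: if
`ψ - η_i L_i` is convex for `i = 1, …, T`, then the estimation-error energy is at most the
disturbance energy. -/
theorem stmt_19 {m : ℕ} (T : ℕ) (hT : 1 ≤ T) (y : ℕ → ℝ)
    (f : ℕ → EuclideanSpace ℝ (Fin m) → ℝ) (hf : ∀ i, Differentiable ℝ (f i))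
    (l : ℝ → ℝ) (hl : Differentiable ℝ l) (hlnn : ∀ z, 0 ≤ l z)
    (hl0 : l 0 = 0) (hl'0 : deriv l 0 = 0)
    (ψ : EuclideanSpace ℝ (Fin m) → ℝ) (hψ : Differentiable ℝ ψ)
    (hψconv : StrictConvexOn ℝ Set.univ ψ)
    (L : ℕ → EuclideanSpace ℝ (Fin m) → ℝ)
    (hLdef : ∀ i u, L i u = l (y i - f i u))
    (η : ℕ → ℝ) (hη : ∀ i, 0 < η i)
    (hstep : ∀ i ∈ Finset.range T,
      ConvexOn ℝ Set.univ (fun u => ψ u - η (i + 1) * L (i + 1) u))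
    (w₀ : EuclideanSpace ℝ (Fin m))
    (w : ℕ → EuclideanSpace ℝ (Fin m)) (hw0 : w 0 = w₀)
    (hupd : ∀ i : ℕ,
      gradient ψ (w (i + 1)) =
        gradient ψ (w i) - η (i + 1) • gradient (L (i + 1)) (w i))
    (wstar : EuclideanSpace ℝ (Fin m)) (v : ℕ → ℝ)
    (hdata : ∀ i : ℕ, y (i + 1) = f (i + 1) wstar + v (i + 1)) :
    Dbreg ψ wstar (w T)
        + ∑ i ∈ Finset.range T, η (i + 1) * Dbreg (L (i + 1)) wstar (w i)
      ≤ Dbreg ψ wstar w₀ + ∑ i ∈ Finset.range T, η (i + 1) * l (v (i + 1)) :=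
  stmt_19_general T y f hf l hl hlnn ψ hψ L hLdef η hη hstep w₀ w hw0 hupd wstar v hdata
end
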